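/- Riemann–Liouville fractional integral of the Prabhakar kernel: for real α, β, ρ > 0, γ, λ ∈ ℂ and t > 0, (1/Γ(ρ)) ∫_0^t (t−u)^{ρ−1} u^{β−1} E_{α,β}^γ(λ u^α) du = t^{β+ρ−1} E_{α,β+ρ}^γ(λ t^α). -/

import Mathlib

/-!
Expanding `E_{α,β}^γ` in its power series, the integrand becomes
`∑ c_k λ^k (t-u)^{ρ-1} u^{αk+β-1}` with `c_k = (γ)_k / (k! Γ(αk+β))`. Each term is a Beta
integral, `∫₀ᵗ (t-u)^{ρ-1} u^{q-1} du = Γ(ρ) Γ(q) / Γ(q+ρ) · t^{q+ρ-1}`, which turns `Γ(αk+β)`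
into `Γ(αk+β+ρ)` and so produces the series of `E_{α,β+ρ}^γ`. Integrating term by term is
legitimate because the kernels are nonnegative, so the integrated absolute values form the
absolute series of `E_{α,β+ρ}^γ`; it converges by the ratio test since `Γ(x) / Γ(x+α) → 0`,
a consequence of the log-convexity of `Γ`.
-/

open scoped Real
open Complex Filter

/-- The Prabhakar (three-parameter Mittag-Leffler) function, defined by its
entire power series, with reciprocal Gamma understood as `0` at poles. -/
noncomputable def prabhakar (α β γ z : ℂ) : ℂ :=
  ∑' k : ℕ, (ascPochhammer ℂ k).eval γ * z ^ k / ((Nat.factorial k : ℂ) * Complex.Gamma (α * k + β))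

open MeasureTheory Set Topology

namespace Real

theorem rpow_mul_Gamma_le_Gamma_add {a x : ℝ} (ha : 0 < a) (hx : 1 < x) :
    (x - 1) ^ a * Gamma x ≤ Gamma (x + a) := by
  have hx₁ : 0 < x - 1 := sub_pos.2 hx
  have hΓx₁ : 0 < Gamma (x - 1) := Gamma_pos_of_pos hx₁
  have hfe : Gamma x = (x - 1) * Gamma (x - 1) := by
    simpa using Gamma_add_one hx₁.ne'
  have hslope := convexOn_log_Gamma.slope_mono_adjacent (mem_Ioi.2 hx₁)
    (mem_Ioi.2 (by linarith : 0 < x + a)) (sub_one_lt x) (lt_add_of_pos_right x ha)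
  have hlog : log (x - 1) * a ≤ log (Gamma (x + a)) - log (Gamma x) := by
    rw [le_div_iff₀ (by simpa using ha)] at hslope
    simpa [hfe, log_mul hx₁.ne' hΓx₁.ne'] using hslope
  rw [← log_le_log_iff (by positivity) (Gamma_pos_of_pos (by linarith)),
    log_mul (by positivity) (by positivity), log_rpow hx₁]
  linarith

theorem tendsto_Gamma_div_Gamma_add_atTop {a : ℝ} (ha : 0 < a) :
    Tendsto (fun x => Gamma x / Gamma (x + a)) atTop (𝓝 0) := by
  have hbound : Tendsto (fun x : ℝ => (x - 1) ^ (-a)) atTop (𝓝 0) :=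
    (tendsto_rpow_neg_atTop ha).comp (tendsto_atTop_add_const_right _ _ tendsto_id)
  refine squeeze_zero' ?_ ?_ hbound
  · filter_upwards [eventually_gt_atTop 0] with x hx
    exact div_nonneg (Gamma_pos_of_pos hx).le (Gamma_pos_of_pos (by linarith)).le
  · filter_upwards [eventually_gt_atTop 1] with x hx
    have hx₁ : 0 < x - 1 := sub_pos.2 hx
    rw [div_le_iff₀ (Gamma_pos_of_pos (by linarith)), rpow_neg hx₁.le, inv_mul_eq_div,
      le_div_iff₀ (by positivity), mul_comm]
    exact rpow_mul_Gamma_le_Gamma_add ha hx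

theorem summable_pow_div_Gamma {a : ℝ} (ha : 0 < a) (b R : ℝ) :
    Summable fun k : ℕ => R ^ k / Gamma (a * k + b) := by
  have hx : Tendsto (fun k : ℕ => a * k + b) atTop atTop :=
    tendsto_atTop_add_const_right _ _ (tendsto_natCast_atTop_atTop.const_mul_atTop ha)
  have hratio : Tendsto (fun k : ℕ => |R| * (Gamma (a * k + b) / Gamma (a * k + b + a)))
      atTop (𝓝 0) := by
    simpa using ((tendsto_Gamma_div_Gamma_add_atTop ha).comp hx).const_mul |R|
  refine summable_of_ratio_norm_eventually_le one_half_lt_one ?_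
  filter_upwards [hratio.eventually (gt_mem_nhds one_half_pos), hx.eventually_gt_atTop 0]
    with k hk hpos
  have hΓ : 0 < Gamma (a * k + b) := Gamma_pos_of_pos hpos
  have hΓa : 0 < Gamma (a * k + b + a) := Gamma_pos_of_pos (by linarith)
  have hshift : a * ((k + 1 : ℕ) : ℝ) + b = a * k + b + a := by push_cast; ring
  calc ‖R ^ (k + 1) / Gamma (a * ((k + 1 : ℕ) : ℝ) + b)‖
      = |R| * (Gamma (a * k + b) / Gamma (a * k + b + a)) * ‖R ^ k / Gamma (a * k + b)‖ := by
        rw [hshift, norm_div, norm_div, pow_succ, norm_mul, norm_of_nonneg hΓ.le,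
          norm_of_nonneg hΓa.le, norm_eq_abs R]
        field_simp
    _ ≤ 1 / 2 * ‖R ^ k / Gamma (a * k + b)‖ := by gcongr

end Real

theorem norm_ascPochhammer_eval_le {R : Type*} [NormedRing R] [NormOneClass R] (x : R) (k : ℕ) :
    ‖(ascPochhammer R k).eval x‖ ≤ (‖x‖ + 1) ^ k * k.factorial := by
  induction k with
  | zero => simp
  | succ k ih =>
    have hstep : ‖x + k‖ ≤ (‖x‖ + 1) * (k + 1) := by
      have := Nat.norm_cast_le (α := R) k
      rw [norm_one, mul_one] at this
      nlinarith [norm_add_le x k, norm_nonneg x, (Nat.cast_nonneg k : (0 : ℝ) ≤ k)]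
    calc ‖(ascPochhammer R (k + 1)).eval x‖
        ≤ ‖(ascPochhammer R k).eval x‖ * ‖x + k‖ := by
          rw [ascPochhammer_succ_eval]; exact norm_mul_le _ _
      _ ≤ (‖x‖ + 1) ^ k * k.factorial * ((‖x‖ + 1) * (k + 1)) := by gcongr
      _ = (‖x‖ + 1) ^ (k + 1) * (k + 1).factorial := by push_cast [Nat.factorial_succ]; ring

theorem integral_sub_rpow_mul_rpow {p q t : ℝ} (hp : 0 < p) (hq : 0 < q) (ht : 0 < t) :
    ∫ u in (0 : ℝ)..t, (t - u) ^ (p - 1) * u ^ (q - 1) =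
      Real.Gamma p * Real.Gamma q / Real.Gamma (p + q) * t ^ (p + q - 1) := by
  have hbeta : betaIntegral q p = ((Real.Gamma p * Real.Gamma q / Real.Gamma (p + q) : ℝ) : ℂ) := by
    have h := Gamma_mul_Gamma_eq_betaIntegral (s := q) (t := p) (by simpa) (by simpa)
    rw [← ofReal_add, Gamma_ofReal, Gamma_ofReal, Gamma_ofReal, add_comm q p] at h
    push_cast
    rw [eq_div_iff (by exact_mod_cast (Real.Gamma_pos_of_pos (by linarith)).ne'), mul_comm, ← h,
      mul_comm]
  apply ofReal_injective
  rw [← intervalIntegral.integral_ofReal]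
  calc ∫ u in (0 : ℝ)..t, (((t - u) ^ (p - 1) * u ^ (q - 1) : ℝ) : ℂ)
      = ∫ u in (0 : ℝ)..t, (u : ℂ) ^ ((q : ℂ) - 1) * ((t : ℂ) - u) ^ ((p : ℂ) - 1) := by
        refine intervalIntegral.integral_congr fun u hu => ?_
        rw [uIcc_of_le ht.le] at hu
        rw [ofReal_mul, ofReal_cpow (sub_nonneg.2 hu.2), ofReal_cpow hu.1, mul_comm]
        push_cast; ring
    _ = (t : ℂ) ^ ((q : ℂ) + p - 1) * betaIntegral q p := betaIntegral_scaled _ _ ht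
    _ = _ := by
        rw [hbeta, ofReal_mul, ofReal_cpow ht.le]
        push_cast; ring_nf

/-- `betaIntegral_scaled` holds without integrability hypotheses, so the nonzero closed form of the
integral certifies integrability. -/
theorem intervalIntegrable_sub_rpow_mul_rpow {p q t : ℝ} (hp : 0 < p) (hq : 0 < q) (ht : 0 < t) :
    IntervalIntegrable (fun u => (t - u) ^ (p - 1) * u ^ (q - 1)) volume 0 t := by
  apply intervalIntegral.intervalIntegrable_of_integral_ne_zero
  rw [integral_sub_rpow_mul_rpow hp hq ht]
  have := Real.Gamma_pos_of_pos hp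
  have := Real.Gamma_pos_of_pos hq
  have := Real.Gamma_pos_of_pos (add_pos hp hq)
  positivity

theorem integral_norm_mul_ofReal {X : Type*} [MeasurableSpace X] {μ : Measure X} (c : ℂ)
    {g : X → ℝ} (hg : 0 ≤ᵐ[μ] g) :
    ∫ x, ‖c * (g x : ℂ)‖ ∂μ = ‖c * ∫ x, (g x : ℂ) ∂μ‖ := by
  have hnorm : (fun x => ‖c * (g x : ℂ)‖) =ᵐ[μ] fun x => ‖c‖ * g x := by
    filter_upwards [hg] with x hx
    rw [norm_mul, norm_real, Real.norm_of_nonneg hx]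
  rw [integral_congr_ae hnorm, integral_const_mul, integral_complex_ofReal, norm_mul, norm_real,
    Real.norm_of_nonneg (integral_nonneg_of_ae hg)]

theorem integral_tsum_mul_ofReal {X : Type*} [MeasurableSpace X] {μ : Measure X} {c : ℕ → ℂ}
    {g : ℕ → X → ℝ} (hg : ∀ k, 0 ≤ᵐ[μ] g k) (hg_int : ∀ k, Integrable (g k) μ)
    (hsum : Summable fun k => ‖c k * ∫ x, (g k x : ℂ) ∂μ‖) :
    ∫ x, ∑' k, c k * (g k x : ℂ) ∂μ = ∑' k, c k * ∫ x, (g k x : ℂ) ∂μ := by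
  rw [← integral_tsum_of_summable_integral_norm (F := fun k x => c k * (g k x : ℂ))
    (fun k => (hg_int k).ofReal.const_mul (c k))]
  · simp only [integral_const_mul]
  · simpa only [integral_norm_mul_ofReal _ (hg _)] using hsum

noncomputable def prabhakarCoeff (α β γ : ℂ) (k : ℕ) : ℂ :=
  (ascPochhammer ℂ k).eval γ / (k.factorial * Complex.Gamma (α * k + β))

theorem prabhakar_eq_tsum (α β γ z : ℂ) :
    prabhakar α β γ z = ∑' k, prabhakarCoeff α β γ k * z ^ k :=
  tsum_congr fun k => by rw [prabhakarCoeff, div_mul_eq_mul_div]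

theorem Complex.Gamma_ofReal_mul_natCast_add (α β : ℝ) (k : ℕ) :
    Complex.Gamma (α * k + β) = Real.Gamma (α * k + β) := by
  exact_mod_cast Gamma_ofReal _

theorem norm_prabhakarCoeff_le (α β : ℝ) (γ : ℂ) (k : ℕ) :
    ‖prabhakarCoeff α β γ k‖ ≤ (‖γ‖ + 1) ^ k / |Real.Gamma (α * k + β)| := by
  rw [prabhakarCoeff, Gamma_ofReal_mul_natCast_add, norm_div, norm_mul, norm_natCast, norm_real,
    Real.norm_eq_abs, ← div_div]
  gcongr
  rw [div_le_iff₀ (by positivity)]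
  exact norm_ascPochhammer_eval_le γ k

theorem summable_norm_prabhakarCoeff_mul_pow {α : ℝ} (hα : 0 < α) (β : ℝ) (γ z : ℂ) :
    Summable fun k => ‖prabhakarCoeff α β γ k * z ^ k‖ := by
  refine (Real.summable_pow_div_Gamma hα β ((‖γ‖ + 1) * ‖z‖)).abs.of_nonneg_of_le
    (fun _ => norm_nonneg _) fun k => ?_
  calc ‖prabhakarCoeff α β γ k * z ^ k‖
      ≤ (‖γ‖ + 1) ^ k / |Real.Gamma (α * k + β)| * ‖z‖ ^ k := by
        rw [norm_mul, norm_pow]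
        gcongr
        exact norm_prabhakarCoeff_le α β γ k
    _ = |((‖γ‖ + 1) * ‖z‖) ^ k / Real.Gamma (α * k + β)| := by
        rw [abs_div, mul_pow, abs_of_nonneg (by positivity : (0 : ℝ) ≤ (‖γ‖ + 1) ^ k * ‖z‖ ^ k)]
        ring

theorem rpow_mul_prabhakar_eq_tsum (α β : ℝ) (γ lam : ℂ) {u : ℝ} (hu : 0 < u) :
    ((u ^ (β - 1) : ℝ) : ℂ) * prabhakar α β γ (lam * ((u ^ α : ℝ) : ℂ)) =
      ∑' k : ℕ, prabhakarCoeff α β γ k * lam ^ k * ((u ^ (α * k + β - 1) : ℝ) : ℂ) := by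
  rw [prabhakar_eq_tsum, ← tsum_mul_left]
  refine tsum_congr fun k => ?_
  rw [add_sub_assoc, Real.rpow_add hu, Real.rpow_mul_natCast hu.le]
  push_cast
  ring

theorem prabhakarCoeff_mul_integral_kernel {α β ρ t : ℝ} (hα : 0 ≤ α) (hβ : 0 < β)
    (hρ : 0 < ρ) (ht : 0 < t) (γ lam : ℂ) (k : ℕ) :
    prabhakarCoeff α β γ k * lam ^ k *
        ∫ u in Ioc 0 t, (((t - u) ^ (ρ - 1) * u ^ (α * k + β - 1) : ℝ) : ℂ) =
      Real.Gamma ρ * ((t ^ (β + ρ - 1) : ℝ) : ℂ) *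
        (prabhakarCoeff α (β + ρ) γ k * (lam * ((t ^ α : ℝ) : ℂ)) ^ k) := by
  have hq : 0 < α * k + β := by positivity
  have hΓ : (Real.Gamma (α * k + β) : ℂ) ≠ 0 := ofReal_ne_zero.2 (Real.Gamma_pos_of_pos hq).ne'
  have hΓρ : (Real.Gamma (α * k + (β + ρ)) : ℂ) ≠ 0 :=
    ofReal_ne_zero.2 (Real.Gamma_pos_of_pos (by linarith)).ne'
  have hpow : t ^ (ρ + (α * k + β) - 1) = (t ^ α) ^ k * t ^ (β + ρ - 1) := by
    rw [← Real.rpow_mul_natCast ht.le, ← Real.rpow_add ht]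
    ring_nf
  rw [← intervalIntegral.integral_of_le ht.le, intervalIntegral.integral_ofReal,
    integral_sub_rpow_mul_rpow hρ hq ht, hpow,
    prabhakarCoeff, prabhakarCoeff, Gamma_ofReal_mul_natCast_add, ← ofReal_add,
    Gamma_ofReal_mul_natCast_add, show ρ + (α * k + β) = α * k + (β + ρ) by ring]
  push_cast
  field_simp
  ring

theorem prabhakar_RL_integral (α β ρ : ℝ) (hα : 0 < α) (hβ : 0 < β) (hρ : 0 < ρ)
    (γ lam : ℂ) (t : ℝ) (ht : 0 < t) :
    (1 / (Real.Gamma ρ : ℂ)) *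
        ∫ u in (0:ℝ)..t,
          (((t - u) ^ (ρ - 1) : ℝ) : ℂ) * ((u ^ (β - 1) : ℝ) : ℂ) *
            prabhakar α β γ (lam * ((u ^ α : ℝ) : ℂ)) =
      ((t ^ (β + ρ - 1) : ℝ) : ℂ) * prabhakar α (β + ρ) γ (lam * ((t ^ α : ℝ) : ℂ)) := by
  have hexpand : EqOn (fun u : ℝ => (((t - u) ^ (ρ - 1) : ℝ) : ℂ) * ((u ^ (β - 1) : ℝ) : ℂ) *
      prabhakar α β γ (lam * ((u ^ α : ℝ) : ℂ))) (fun u => ∑' k : ℕ, prabhakarCoeff α β γ k *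
        lam ^ k * (((t - u) ^ (ρ - 1) * u ^ (α * k + β - 1) : ℝ) : ℂ)) (Ioc 0 t) := fun u hu => by
    simp only [mul_assoc, rpow_mul_prabhakar_eq_tsum α β γ lam hu.1, ← tsum_mul_left]
    exact tsum_congr fun k => by push_cast; ring
  have hterm := prabhakarCoeff_mul_integral_kernel hα.le hβ hρ ht γ lam
  rw [intervalIntegral.integral_of_le ht.le, setIntegral_congr_fun measurableSet_Ioc hexpand,
    integral_tsum_mul_ofReal (fun k => ?_) (fun k => ?_) ?_]
  · have hΓρ : (Real.Gamma ρ : ℂ) ≠ 0 := ofReal_ne_zero.2 (Real.Gamma_pos_of_pos hρ).ne'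
    simp only [hterm, tsum_mul_left, prabhakar_eq_tsum]
    field_simp
  · simpa only [hterm, norm_mul, ofReal_add] using
      (summable_norm_prabhakarCoeff_mul_pow hα (β + ρ) γ (lam * ((t ^ α : ℝ) : ℂ))).mul_left
        (‖(Real.Gamma ρ : ℂ)‖ * ‖((t ^ (β + ρ - 1) : ℝ) : ℂ)‖)
  · exact (ae_restrict_iff' measurableSet_Ioc).2 <| ae_of_all _ fun u hu =>
      mul_nonneg (Real.rpow_nonneg (sub_nonneg.2 hu.2) _) (Real.rpow_nonneg hu.1.le _)
  · exact (intervalIntegrable_iff_integrableOn_Ioc_of_le ht.le).1 <|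
      intervalIntegrable_sub_rpow_mul_rpow hρ (by positivity) ht
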